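/- arXiv:1701.07183 — 5 statements merged into one kernel-verified Lean document; each statement's English description precedes it below -/
import Mathlib

section
/- Let Z be a set and let h_1, …, h_k : Z → Z be maps such that any two of them commute and any two distinct ones *-commute. If m, n ∈ ℕ^k satisfy min(m_i, n_i) = 0 for every 1 ≤ i ≤ k, then the maps h^m := h_1^{m_1} ∘ ⋯ ∘ h_k^{m_k} and h^n := h_1^{n_1} ∘ ⋯ ∘ h_k^{n_k} commute and *-commute. -/
/-!
`f` and `g` *-commute exactly when the square `f ∘ g = g ∘ f` is a pullback square of sets.
Pasting pullback squares shows that *-commuting with `f` is preserved by composition, and it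
holds trivially for the identity. Hence `h^m` and `h^n` *-commute as soon as every factor
`(h i)^[m i]` *-commutes with every factor `(h j)^[n j]`: for `i ≠ j` this follows from the
hypothesis on `h i` and `h j`, and for `i = j` one of the two factors is the identity.
-/

/-- Maps `f, g : Z → Z` *-commute: they commute, and for every `x, y` with
`f x = g y` there is a unique `z` with `g z = x` and `f z = y`. -/
def StarCommute {Z : Type*} (f g : Z → Z) : Prop :=
  f ∘ g = g ∘ f ∧ ∀ x y : Z, f x = g y → ∃! z : Z, g z = x ∧ f z = y

/-- `h^m = h 0 ^[m 0] ∘ ⋯ ∘ h (k-1) ^[m (k-1)]`. -/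
def compIter {Z : Type*} {k : ℕ} (h : Fin k → Z → Z) (m : Fin k → ℕ) : Z → Z :=
  (List.ofFn fun i => (h i)^[m i]).foldr (· ∘ ·) id

namespace StarCommute

variable {Z : Type*} {f g g' : Z → Z}

theorem symm (h : StarCommute f g) : StarCommute g f := by
  obtain ⟨hcomm, hpull⟩ := h
  refine ⟨hcomm.symm, fun x y hxy => ?_⟩
  obtain ⟨z, ⟨hgz, hfz⟩, huniq⟩ := hpull y x hxy.symm
  exact ⟨z, ⟨hfz, hgz⟩, fun w hw => huniq w ⟨hw.2, hw.1⟩⟩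

theorem id_left (g : Z → Z) : StarCommute id g :=
  ⟨rfl, fun _ y hxy => ⟨y, ⟨hxy.symm, rfl⟩, fun _ hw => hw.2⟩⟩

theorem id_right (f : Z → Z) : StarCommute f id :=
  (id_left f).symm

theorem comp_right (hg : StarCommute f g) (hg' : StarCommute f g') :
    StarCommute f (g' ∘ g) := by
  obtain ⟨hgcomm, hgpull⟩ := hg
  obtain ⟨hg'comm, hg'pull⟩ := hg'
  refine ⟨by rw [← Function.comp_assoc, hg'comm, Function.comp_assoc, hgcomm]; rfl,
    fun x y hxy => ?_⟩
  -- Lift `x` through `g'` to `z₁` with `f z₁ = g y`, then lift `z₁` through `g`.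
  obtain ⟨z₁, ⟨hg'z₁, hfz₁⟩, huniq₁⟩ := hg'pull x (g y) hxy
  obtain ⟨z, ⟨hgz, hfz⟩, huniq⟩ := hgpull z₁ y hfz₁
  refine ⟨z, ⟨by simp [hgz, hg'z₁], hfz⟩, fun w ⟨hg'gw, hfw⟩ => huniq w ⟨?_, hfw⟩⟩
  have hfgw : f (g w) = g y := by rw [← hfw]; exact congrFun hgcomm w
  exact huniq₁ (g w) ⟨hg'gw, hfgw⟩

theorem iterate_right (h : StarCommute f g) (n : ℕ) : StarCommute f g^[n] := by
  induction n with
  | zero => exact id_right f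
  | succ n ih => rw [Function.iterate_succ']; exact ih.comp_right h

theorem iterate_left (h : StarCommute f g) (n : ℕ) : StarCommute f^[n] g :=
  (h.symm.iterate_right n).symm

theorem foldr_comp_right (L : List (Z → Z)) (hL : ∀ g ∈ L, StarCommute f g) :
    StarCommute f (L.foldr (· ∘ ·) id) := by
  induction L with
  | nil => exact id_right f
  | cons g L ih =>
    rw [List.forall_mem_cons] at hL
    exact (ih hL.2).comp_right hL.1

theorem compIter_right {k : ℕ} (h : Fin k → Z → Z) (n : Fin k → ℕ)
    (hf : ∀ j, StarCommute f (h j)^[n j]) : StarCommute f (compIter h n) :=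
  foldr_comp_right _ fun _ hg => by
    obtain ⟨j, rfl⟩ := List.mem_ofFn.mp hg
    exact hf j

theorem compIter_left {k : ℕ} (h : Fin k → Z → Z) (m : Fin k → ℕ)
    (hg : ∀ i, StarCommute (h i)^[m i] g) : StarCommute (compIter h m) g :=
  (compIter_right h m fun i => (hg i).symm).symm

end StarCommute

theorem compIter_starCommute_general {Z : Type*} {k : ℕ} (h : Fin k → Z → Z)
    (hstar : ∀ i j : Fin k, i ≠ j → StarCommute (h i) (h j))
    (m n : Fin k → ℕ) (hmn : ∀ i, min (m i) (n i) = 0) :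
    StarCommute (compIter h m) (compIter h n) := by
  refine StarCommute.compIter_left h m fun i => StarCommute.compIter_right h n fun j => ?_
  by_cases hij : i = j
  · subst hij
    rcases Nat.min_eq_zero_iff.mp (hmn i) with hm | hn
    · rw [hm]; exact StarCommute.id_left _
    · rw [hn]; exact StarCommute.id_right _
  · exact ((hstar i j hij).iterate_right (n j)).iterate_left (m i)

/-- if the `h i` pairwise commute and distinct ones *-commute, and
`m ⊓ n = 0`, then `h^m` and `h^n` commute and *-commute. -/
theorem compIter_starCommute {Z : Type*} {k : ℕ} (h : Fin k → Z → Z)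
    (hcomm : ∀ i j : Fin k, (h i) ∘ (h j) = (h j) ∘ (h i))
    (hstar : ∀ i j : Fin k, i ≠ j → StarCommute (h i) (h j))
    (m n : Fin k → ℕ) (hmn : ∀ i, min (m i) (n i) = 0) :
    StarCommute (compIter h m) (compIter h n) :=
  compIter_starCommute_general h hstar m n hmn
end

section
/- Let Z be a set and let f, g : Z → Z be maps all of whose fibres are finite. Then for all functions x, y, x', y' : Z → ℂ and every z ∈ Z, Σ_{w ∈ (g∘f)^{-1}(z)} conj(x(w)) conj(y(f(w))) x'(w) y'(f(w)) = Σ_{v ∈ g^{-1}(z)} ( Σ_{w ∈ f^{-1}(v)} conj(x(w)) x'(w) ) conj(y(v)) y'(v). (This says that the multiplication map x ⊗ y ↦ (z ↦ x(z) y(f(z))) from the graph correspondence of f tensored over C(Z) with the graph correspondence of g into the graph correspondence of g∘f preserves the C(Z)-valued inner products ⟨u, v⟩(z) = Σ_{h(w)=z} conj(u(w)) v(w), where h is the respective source map.) -/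
/-- the multiplication map between graph correspondences preserves the
`C(Z)`-valued inner products. -/
theorem graph_correspondence_inner_product {Z : Type*} (f g : Z → Z)
    (hf : ∀ z : Z, (f ⁻¹' {z}).Finite) (hg : ∀ z : Z, (g ⁻¹' {z}).Finite)
    (x y x' y' : Z → ℂ) (z : Z) :
    ∑ᶠ w ∈ (g ∘ f) ⁻¹' {z},
        (starRingEnd ℂ) (x w) * (starRingEnd ℂ) (y (f w)) * x' w * y' (f w)
      = ∑ᶠ v ∈ g ⁻¹' {z},
          (∑ᶠ w ∈ f ⁻¹' {v}, (starRingEnd ℂ) (x w) * x' w) *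
            ((starRingEnd ℂ) (y v) * y' v) := by
  have hset : (g ∘ f) ⁻¹' {z} = ⋃ v ∈ g ⁻¹' {z}, f ⁻¹' {v} := by
    ext w; simp [Function.comp, eq_comm]
  rw [hset, finsum_mem_biUnion]
  · refine finsum_mem_congr rfl fun v hv => ?_
    rw [← (hf v).coe_toFinset, finsum_mem_coe_finset, finsum_mem_coe_finset,
      Finset.sum_mul]
    refine Finset.sum_congr rfl fun w hw => ?_
    simp only [Set.Finite.mem_toFinset, Set.mem_preimage, Set.mem_singleton_iff] at hw
    rw [hw]; ring
  · intro a _ b _ hab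
    simp only [Function.onFun, Set.disjoint_left, Set.mem_preimage,
      Set.mem_singleton_iff]
    rintro w rfl h; exact hab h
  · exact hg z
  · exact fun v _ => hf v
end

section
/- Let Z be a topological space and h : Z → Z a map with finite fibres. Let ρ_1, …, ρ_d : Z → [0,1] be a continuous partition of unity such that h is injective on the support of each ρ_i, and set ξ_i := √ρ_i. Then for every a : Z → ℂ, every function x : Z → ℂ and every z ∈ Z, Σ_{i=1}^d a(z) ξ_i(z) · ( Σ_{w : h(w) = h(z)} ξ_i(w) x(w) ) = a(z) x(z). (This is the identity Σ_{i=1}^d Θ_{a·ξ_i, ξ_i} = φ(a) showing that the left multiplication action of each a ∈ C(Z) on the graph correspondence of h is a finite-rank, hence compact, operator; the case a = 1 is the reconstruction formula saying that {ξ_i} is a Parseval frame.) -/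
/-- for a partition of unity `ρ` with `h` injective on each `supp ρ i`,
setting `ξ i = √(ρ i)`, the operator `∑ i Θ_{a·ξ i, ξ i}` is left multiplication by `a`
on the graph correspondence of `h`. -/
theorem compact_left_action {Z : Type*} [TopologicalSpace Z] (h : Z → Z)
    (hfib : ∀ z : Z, (h ⁻¹' {z}).Finite)
    {d : ℕ} (ρ : Fin d → Z → ℝ)
    (hcont : ∀ i, Continuous (ρ i))
    (hrange : ∀ i z, ρ i z ∈ Set.Icc (0 : ℝ) 1)
    (hpart : ∀ z, ∑ i, ρ i z = 1)
    (hinj : ∀ i, Set.InjOn h (closure {z | ρ i z ≠ 0}))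
    (a x : Z → ℂ) (z : Z) :
    ∑ i, a z * (Real.sqrt (ρ i z) : ℂ) *
        (∑ᶠ w ∈ h ⁻¹' {h z}, (Real.sqrt (ρ i w) : ℂ) * x w)
      = a z * x z := by
  have key : ∀ i, a z * (Real.sqrt (ρ i z) : ℂ) *
      (∑ᶠ w ∈ h ⁻¹' {h z}, (Real.sqrt (ρ i w) : ℂ) * x w)
      = a z * ((ρ i z : ℝ) : ℂ) * x z := by
    intro i
    by_cases hz : ρ i z = 0
    · simp [hz]
    · have hsum : (∑ᶠ w ∈ h ⁻¹' {h z}, (Real.sqrt (ρ i w) : ℂ) * x w)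
          = (Real.sqrt (ρ i z) : ℂ) * x z := by
        have hfin := hfib (h z)
        rw [finsum_mem_eq_finite_toFinset_sum _ hfin]
        have hzmem : z ∈ hfin.toFinset := by simp
        rw [Finset.sum_eq_single_of_mem z hzmem]
        intro w hw hwz
        by_cases hw0 : ρ i w = 0
        · simp [hw0]
        · exfalso
          apply hwz
          apply hinj i (subset_closure hw0) (subset_closure hz)
          simpa using hw
      rw [hsum]
      have hsq : ((Real.sqrt (ρ i z) : ℝ) : ℂ) * ((Real.sqrt (ρ i z) : ℝ) : ℂ)
          = ((ρ i z : ℝ) : ℂ) := by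
        rw [← Complex.ofReal_mul, Real.mul_self_sqrt (hrange i z).1]
      linear_combination a z * x z * hsq
  rw [Finset.sum_congr rfl (fun i _ => key i)]
  have h1 : ∑ i, ((ρ i z : ℝ) : ℂ) = 1 := by exact_mod_cast hpart z
  calc ∑ i, a z * ((ρ i z : ℝ) : ℂ) * x z
      = a z * (∑ i, ((ρ i z : ℝ) : ℂ)) * x z := by
        rw [Finset.mul_sum, Finset.sum_mul]
    _ = a z * x z := by rw [h1]; ring
end

section
/- Let Z be a topological space and let f, g : Z → Z be maps that commute and *-commute, with all fibres of f finite. Let ρ_1, …, ρ_d : Z → [0,1] be a continuous partition of unity such that f is injective on the support of each ρ_i, and set τ_i := √ρ_i. Then for every function x : Z → ℂ and every z ∈ Z, Σ_{i=1}^d τ_i(g(z)) · ( Σ_{w : f(w) = f(z)} τ_i(g(w)) x(w) ) = x(z). (This is the reconstruction formula saying that {τ_i ∘ g} is a Parseval frame for the graph correspondence of f.) -/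
/-- if `f, g` *-commute and `ρ` is a partition of unity with `f` injective
on each `supp ρ i`, then `{√(ρ i) ∘ g}` is a Parseval frame for the graph
correspondence of `f` (reconstruction formula). -/
theorem parseval_frame_comp {Z : Type*} [TopologicalSpace Z] (f g : Z → Z)
    (hstar : StarCommute f g)
    (hfib : ∀ z : Z, (f ⁻¹' {z}).Finite)
    {d : ℕ} (ρ : Fin d → Z → ℝ)
    (hcont : ∀ i, Continuous (ρ i))
    (hrange : ∀ i z, ρ i z ∈ Set.Icc (0 : ℝ) 1)
    (hpart : ∀ z, ∑ i, ρ i z = 1)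
    (hinj : ∀ i, Set.InjOn f (closure {z | ρ i z ≠ 0}))
    (x : Z → ℂ) (z : Z) :
    ∑ i, (Real.sqrt (ρ i (g z)) : ℂ) *
        (∑ᶠ w ∈ f ⁻¹' {f z}, (Real.sqrt (ρ i (g w)) : ℂ) * x w)
      = x z := by
  obtain ⟨hcomm, huniq⟩ := hstar
  have hc : ∀ w, f (g w) = g (f w) := fun w => congrFun hcomm w
  have key : ∀ i w, f w = f z → w ≠ z →
      Real.sqrt (ρ i (g z)) * Real.sqrt (ρ i (g w)) = 0 := by
    intro i w hfw hne
    by_contra h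
    have h1 : ρ i (g z) ≠ 0 := fun h0 => h (by rw [h0, Real.sqrt_zero, zero_mul])
    have h2 : ρ i (g w) ≠ 0 := fun h0 => h (by rw [h0, Real.sqrt_zero, mul_zero])
    have hgz : g z ∈ closure {u | ρ i u ≠ 0} := subset_closure h1
    have hgw : g w ∈ closure {u | ρ i u ≠ 0} := subset_closure h2
    have hg : g z = g w := hinj i hgz hgw (by rw [hc, hc, hfw])
    obtain ⟨u, hu, huu⟩ := huniq (g z) (f z) (hc z)
    exact hne ((huu w ⟨hg.symm, hfw⟩).trans (huu z ⟨rfl, rfl⟩).symm)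
  set S := (hfib (f z)).toFinset with hS
  have hzS : z ∈ S := by simp [hS]
  have hsum : ∀ i, (Real.sqrt (ρ i (g z)) : ℂ) *
      (∑ᶠ w ∈ f ⁻¹' {f z}, (Real.sqrt (ρ i (g w)) : ℂ) * x w)
      = (ρ i (g z) : ℂ) * x z := by
    intro i
    have hSe : f ⁻¹' {f z} = ↑S := by simp [hS]
    rw [hSe, finsum_mem_coe_finset, Finset.mul_sum,
      Finset.sum_eq_single_of_mem z hzS]
    · rw [← mul_assoc, ← Complex.ofReal_mul, Real.mul_self_sqrt (hrange i (g z)).1]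
    · intro w hw hne
      have hfw : f w = f z := by simpa [hS] using hw
      rw [← mul_assoc, ← Complex.ofReal_mul, key i w hfw hne]
      simp
  simp_rw [hsum]
  rw [← Finset.sum_mul]
  have h1 : (∑ i, (ρ i (g z) : ℂ)) = 1 := by
    rw [← Complex.ofReal_sum, hpart (g z), Complex.ofReal_one]
  rw [h1, one_mul]
end

section
/- Let Z be a compact Hausdorff space and h_1, …, h_k : Z → Z pairwise commuting surjective local homeomorphisms, with β_{c_i} := limsup_{j→∞} j^{-1} ln( max_{z∈Z} |h_i^{-j}(z)| ). Let r ∈ (0,∞)^k and β ∈ (0,∞) satisfy β r_i > β_{c_i} for all i, let ε be a finite regular Borel measure on Z, and let μ be a finite Borel measure on Z such that ∫_Z a dμ = Σ_{n∈ℕ^k} e^{-β r·n} ∫_Z ( Σ_{w ∈ (h^n)^{-1}(z)} a(w) ) dε(z) for every continuous a : Z → ℝ. Then: (i) μ satisfies the subinvariance relation, i.e. for every subset K ⊆ {1,…,k} and every continuous a : Z → [0,∞), Σ_{J ⊆ K} (-1)^{|J|} e^{-β Σ_{i∈J} r_i} ∫_Z ( Σ_{w ∈ (h^{e_J})^{-1}(z)}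 a(w) ) dμ(z) ≥ 0; and (ii) ε is recovered from μ: for every continuous a : Z → ℝ, ∫_Z a dε = Σ_{J ⊆ {1,…,k}} (-1)^{|J|} e^{-β Σ_{i∈J} r_i} ∫_Z ( Σ_{w ∈ (h^{e_J})^{-1}(z)} a(w) ) dμ(z). -/
/-!
Write `R^m a (z) = ∑_{w ∈ h^{-m}(z)} a w` and `g m = e^{-β r·m} ∫ R^m a dε`. Since the `h_i`
commute, `R^n R^{e_J} = R^{n + e_J}`, so the hypothesis applied to the continuous function
`R^{e_J} a` gives `e^{-β r(J)} ∫ R^{e_J} a dμ = ∑_{m ≥ e_J} g m`. Summing with signs over `J ⊆ K`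
and exchanging the sums, inclusion–exclusion leaves `∑ g m` over the `m` vanishing on `K`: this is
nonnegative when `a ≥ 0`, and for `K = {1,…,k}` it is `g 0 = ∫ a dε`. The exchange is legitimate
because `|g m| ≤ ‖a‖ ε(Z) ∏_i e^{-β r_i m_i} max_z |h_i^{-m_i}(z)|`, which is summable as
`β r_i > β_{c_i}`; continuity of `R^m a` holds because near any point the fibres of a local
homeomorphism of a compact space are parametrised by finitely many local inverses.
-/

open Filter MeasureTheory

/-- `h^{e_J}`: the composition of the maps `h i` over `i ∈ J`. -/
def compSet {Z : Type*} {k : ℕ} (h : Fin k → Z → Z) (J : Finset (Fin k)) : Z → Z :=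
  compIter h (fun i => if i ∈ J then 1 else 0)

/-- The critical inverse temperature
`β_c = limsup_{j→∞} j⁻¹ ln (max_z |f^{-j}(z)|)` of a map `f : Z → Z`. -/
noncomputable def betaC {Z : Type*} (f : Z → Z) : ℝ :=
  Filter.limsup
    (fun j : ℕ => Real.log (⨆ z : Z, (Nat.card ((f^[j]) ⁻¹' {z}) : ℝ)) / j)
    Filter.atTop

open Topology

section Transfer

variable {X Y W M : Type*}

/-- The transfer operator `R_f` of the paper. -/
noncomputable def transfer [AddCommMonoid M] (f : X → Y) (a : X → M) (y : Y) : M :=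
  ∑ᶠ x ∈ f ⁻¹' {y}, a x

theorem transfer_def [AddCommMonoid M] (f : X → Y) (a : X → M) (y : Y) :
    transfer f a y = ∑ᶠ x ∈ f ⁻¹' {y}, a x :=
  rfl

theorem transfer_eq_sum [AddCommMonoid M] {f : X → Y} {y : Y} (hfin : (f ⁻¹' {y}).Finite)
    (a : X → M) : transfer f a y = ∑ x ∈ hfin.toFinset, a x := by
  rw [transfer, ← finsum_mem_coe_finset, Set.Finite.coe_toFinset]

@[simp]
theorem transfer_id [AddCommMonoid M] (a : X → M) : transfer id a = a := by
  ext x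
  simp [transfer]

theorem transfer_comp [AddCommMonoid M] {f : Y → W} {g : X → Y}
    (hf : ∀ w, (f ⁻¹' {w}).Finite) (hg : ∀ y, (g ⁻¹' {y}).Finite) (a : X → M) :
    transfer (f ∘ g) a = transfer f (transfer g a) := by
  ext w
  have hfiber : (f ∘ g) ⁻¹' {w} = ⋃ y ∈ f ⁻¹' {w}, g ⁻¹' {y} := by
    ext x
    simp
  rw [transfer, hfiber, finsum_mem_biUnion _ (hf w) fun y _ => hg y]
  · rfl
  · exact fun y _ y' _ hne => Set.disjoint_left.mpr fun x hx hx' => hne (hx.symm.trans hx')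

theorem transfer_nonneg {f : X → Y} {a : X → ℝ} (ha : 0 ≤ a) (y : Y) : 0 ≤ transfer f a y :=
  finsum_nonneg fun x => finsum_nonneg fun _ => ha x

theorem transfer_mono {f : X → Y} {y : Y} (hfin : (f ⁻¹' {y}).Finite) {a b : X → ℝ}
    (hab : a ≤ b) : transfer f a y ≤ transfer f b y := by
  rw [transfer_eq_sum hfin, transfer_eq_sum hfin]
  exact Finset.sum_le_sum fun x _ => hab x

theorem transfer_const {f : X → Y} {y : Y} (hfin : (f ⁻¹' {y}).Finite) (c : ℝ) :
    transfer f (fun _ => c) y = Nat.card (f ⁻¹' {y}) * c := by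
  rw [transfer_eq_sum hfin, Finset.sum_const, nsmul_eq_mul, ← Set.ncard_eq_toFinset_card _ hfin,
    Nat.card_coe_set_eq]

variable [TopologicalSpace X] [TopologicalSpace Y]

theorem IsLocalHomeomorph.finite_preimage_singleton [CompactSpace X] [T1Space Y] {f : X → Y}
    (hf : IsLocalHomeomorph f) (y : Y) : (f ⁻¹' {y}).Finite := by
  have hdiscrete : IsDiscrete (f '' (f ⁻¹' {y})) :=
    ⟨(Set.subsingleton_singleton.anti (Set.image_preimage_subset f {y})).coe_sort.discreteTopology⟩
  exact (isClosed_singleton.preimage hf.continuous).isCompact.finite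
    ((hf.isLocalHomeomorphOn.mono (Set.subset_univ _)).isDiscrete_of_image hdiscrete)

end Transfer

section LocalHomeomorph

variable {X Y M : Type*} [TopologicalSpace X] [TopologicalSpace Y] {f : X → Y}

theorem IsLocalHomeomorph.mem_localInverseAt_source (hf : IsLocalHomeomorph f) {x : X} {y : Y}
    (hx : x ∈ f ⁻¹' {y}) : y ∈ (hf.localInverseAt x).source :=
  (show f x = y from hx) ▸ hf.apply_self_mem_localInverseAt_source

theorem IsClosedMap.eventually_preimage_singleton_subset (hf : IsClosedMap f) {U : Set X}
    (hU : IsOpen U) {y₀ : Y} (hy₀ : f ⁻¹' {y₀} ⊆ U) : ∀ᶠ y in 𝓝 y₀, f ⁻¹' {y} ⊆ U := by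
  filter_upwards [(isClosedMap_iff_kernImage.mp hf hU).mem_nhds fun x hx => hy₀ hx] with y hy x hx
  exact hy hx

variable [CompactSpace X] [T2Space X] [T2Space Y]

theorem IsLocalHomeomorph.eventually_transfer_eq_sum_localInverseAt [AddCommMonoid M]
    (hf : IsLocalHomeomorph f) (y₀ : Y) :
    ∀ᶠ y in 𝓝 y₀, ∀ a : X → M, transfer f a y =
      ∑ x ∈ (hf.finite_preimage_singleton y₀).toFinset, a (hf.localInverseAt x y) := by
  set F := f ⁻¹' {y₀}
  have hF : F.Finite := hf.finite_preimage_singleton y₀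
  obtain ⟨U, hU, hUdisj⟩ := hF.t2_separation
  set V : X → Set X := fun x => (hf.localInverseAt x).target ∩ U x
  have hV : ∀ x, IsOpen (V x) ∧ x ∈ V x := fun x =>
    ⟨(hf.localInverseAt x).open_target.inter (hU x).2,
      hf.self_mem_localInverseAt_target, (hU x).1⟩
  have hcover : ∀ᶠ y in 𝓝 y₀, f ⁻¹' {y} ⊆ ⋃ x ∈ F, V x :=
    hf.continuous.isClosedMap.eventually_preimage_singleton_subset
      (isOpen_biUnion fun x _ => (hV x).1) fun x hx => Set.mem_biUnion hx (hV x).2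
  have hsection : ∀ᶠ y in 𝓝 y₀, ∀ x ∈ F,
      y ∈ (hf.localInverseAt x).source ∧ hf.localInverseAt x y ∈ V x := by
    refine (Filter.eventually_all_finite hF).mpr fun x hx => ?_
    have hlim : Tendsto (hf.localInverseAt x) (𝓝 y₀) (𝓝 x) := by
      rw [← show f x = y₀ from hx]
      simpa only [ContinuousAt, hf.localInverseAt_apply_self] using
        (hf.localInverseAt x).continuousAt hf.apply_self_mem_localInverseAt_source
    exact ((hf.localInverseAt x).open_source.eventually_mem
      (hf.mem_localInverseAt_source hx)).and
      (hlim.eventually ((hV x).1.eventually_mem (hV x).2))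
  filter_upwards [hcover, hsection] with y hcov hsec a
  have hfiber : f ⁻¹' {y} = (fun x => hf.localInverseAt x y) '' F := by
    refine Set.Subset.antisymm (fun x' hx' => ?_) ?_
    · obtain ⟨x, hx, hx'V⟩ := Set.mem_iUnion₂.mp (hcov hx')
      refine ⟨x, hx, hf.injOn_localInverseAt_target (hsec x hx).2.1 hx'V.1 ?_⟩
      rw [hf.apply_localInverseAt_of_mem (hsec x hx).1]
      exact hx'.symm
    · rintro _ ⟨x, hx, rfl⟩
      exact hf.apply_localInverseAt_of_mem (hsec x hx).1
  have hinj : F.InjOn fun x => hf.localInverseAt x y := by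
    intro x hx x' hx' heq
    by_contra hne
    exact (hUdisj hx hx' hne).ne_of_mem (hsec x hx).2.2 (hsec x' hx').2.2 heq
  rw [transfer, hfiber, finsum_mem_image hinj, ← finsum_mem_coe_finset, hF.coe_toFinset]

theorem IsLocalHomeomorph.continuous_transfer [AddCommMonoid M] [TopologicalSpace M]
    [ContinuousAdd M] (hf : IsLocalHomeomorph f) {a : X → M} (ha : Continuous a) :
    Continuous (transfer f a) := by
  refine continuous_iff_continuousAt.mpr fun y₀ => ContinuousAt.congr ?_
    ((hf.eventually_transfer_eq_sum_localInverseAt y₀).mono fun y hy => (hy a).symm)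
  exact tendsto_finsetSum _ fun x hx => ha.continuousAt.comp
    ((hf.localInverseAt x).continuousAt (hf.mem_localInverseAt_source (by simpa using hx)))

end LocalHomeomorph

section FiberCard

variable {X Y W : Type*}

noncomputable def fiberCardSup (f : X → Y) : ℝ :=
  ⨆ y, (Nat.card (f ⁻¹' {y}) : ℝ)

theorem fiberCardSup_nonneg (f : X → Y) : 0 ≤ fiberCardSup f :=
  Real.iSup_nonneg fun _ => Nat.cast_nonneg _

theorem fiberCardSup_id_le : fiberCardSup (id : X → X) ≤ 1 :=
  Real.iSup_le (fun x => by simp) zero_le_one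

variable [TopologicalSpace X] [TopologicalSpace Y] [TopologicalSpace W]

protected theorem IsLocalHomeomorph.iterate {f : X → X} (hf : IsLocalHomeomorph f) (n : ℕ) :
    IsLocalHomeomorph f^[n] := by
  induction n with
  | zero => exact (Homeomorph.refl X).isLocalHomeomorph
  | succ n ih => exact ih.comp hf

variable [CompactSpace X] [CompactSpace Y] [CompactSpace W] [T2Space X] [T2Space Y] [T2Space W]

theorem IsLocalHomeomorph.natCard_preimage_singleton_le_fiberCardSup {f : X → Y}
    (hf : IsLocalHomeomorph f) (y : Y) : (Nat.card (f ⁻¹' {y}) : ℝ) ≤ fiberCardSup f := by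
  have hcard : (fun y => (Nat.card (f ⁻¹' {y}) : ℝ)) = transfer f fun _ => 1 :=
    funext fun y => by rw [transfer_const (hf.finite_preimage_singleton y), mul_one]
  refine le_ciSup (f := fun y => (Nat.card (f ⁻¹' {y}) : ℝ)) ?_ y
  rw [hcard]
  exact (isCompact_range (hf.continuous_transfer continuous_const)).bddAbove

theorem IsLocalHomeomorph.norm_transfer_le {f : X → Y} (hf : IsLocalHomeomorph f) {a : X → ℝ}
    {C : ℝ} (hC : ∀ x, ‖a x‖ ≤ C) (hC0 : 0 ≤ C) (y : Y) :
    ‖transfer f a y‖ ≤ fiberCardSup f * C := by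
  have hfin := hf.finite_preimage_singleton y
  calc ‖transfer f a y‖ ≤ transfer f (fun _ => C) y := by
        rw [transfer_eq_sum hfin, transfer_eq_sum hfin]
        exact norm_sum_le_of_le _ fun x _ => hC x
    _ = Nat.card (f ⁻¹' {y}) * C := transfer_const hfin C
    _ ≤ fiberCardSup f * C := by
        gcongr
        exact hf.natCard_preimage_singleton_le_fiberCardSup y

theorem IsLocalHomeomorph.fiberCardSup_comp_le {f : Y → W} {g : X → Y}
    (hf : IsLocalHomeomorph f) (hg : IsLocalHomeomorph g) :
    fiberCardSup (f ∘ g) ≤ fiberCardSup f * fiberCardSup g := by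
  refine Real.iSup_le (fun w => ?_) (mul_nonneg (fiberCardSup_nonneg f) (fiberCardSup_nonneg g))
  have hfin := hf.finite_preimage_singleton
  have hgcard : ∀ y, transfer g (fun _ => 1) y ≤ fiberCardSup g := fun y => by
    rw [transfer_const (hg.finite_preimage_singleton y), mul_one]
    exact hg.natCard_preimage_singleton_le_fiberCardSup y
  calc (Nat.card ((f ∘ g) ⁻¹' {w}) : ℝ)
      = transfer f (transfer g fun _ => 1) w := by
        rw [← transfer_comp hfin hg.finite_preimage_singleton,
          transfer_const ((hf.comp hg).finite_preimage_singleton w), mul_one]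
    _ ≤ transfer f (fun _ => fiberCardSup g) w := transfer_mono (hfin w) hgcard
    _ = Nat.card (f ⁻¹' {w}) * fiberCardSup g := transfer_const (hfin w) _
    _ ≤ fiberCardSup f * fiberCardSup g := by
        gcongr
        · exact fiberCardSup_nonneg g
        · exact hf.natCard_preimage_singleton_le_fiberCardSup w

theorem IsLocalHomeomorph.fiberCardSup_iterate_le {f : X → X} (hf : IsLocalHomeomorph f)
    (n : ℕ) : fiberCardSup f^[n] ≤ fiberCardSup f ^ n := by
  induction n with
  | zero => exact fiberCardSup_id_le
  | succ n ih =>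
    rw [Function.iterate_succ', pow_succ']
    exact (hf.fiberCardSup_comp_le (hf.iterate n)).trans
      (mul_le_mul_of_nonneg_left ih (fiberCardSup_nonneg f))

end FiberCard

/-- The multi-index `e_J = ∑_{i ∈ J} e_i`. -/
def indicatorVec {ι : Type*} [DecidableEq ι] (J : Finset ι) : ι → ℕ :=
  fun i => if i ∈ J then 1 else 0

section CompIter

variable {Z : Type*} {k : ℕ}

theorem compIter_succ (h : Fin (k + 1) → Z → Z) (m : Fin (k + 1) → ℕ) :
    compIter h m = (h 0)^[m 0] ∘ compIter (fun i => h i.succ) (fun i => m i.succ) := by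
  rw [compIter, List.ofFn_succ, List.foldr_cons]
  rfl

theorem compSet_eq_compIter (h : Fin k → Z → Z) (J : Finset (Fin k)) :
    compSet h J = compIter h (indicatorVec J) :=
  rfl

@[simp]
theorem compIter_zero (h : Fin k → Z → Z) : compIter h 0 = id := by
  induction k with
  | zero => rfl
  | succ k ih => exact (compIter_succ h 0).trans (ih _)

theorem Function.Commute.compIter {g : Z → Z} {h : Fin k → Z → Z}
    (hg : ∀ i, Function.Commute g (h i)) (m : Fin k → ℕ) :
    Function.Commute g (compIter h m) := by
  induction k with
  | zero => exact fun _ => rfl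
  | succ k ih =>
    rw [compIter_succ]
    exact ((hg 0).iterate_right (m 0)).comp_right (ih (fun i => hg i.succ) _)

theorem compIter_add {h : Fin k → Z → Z} (hc : ∀ i j, Function.Commute (h i) (h j))
    (m n : Fin k → ℕ) : compIter h (m + n) = compIter h m ∘ compIter h n := by
  induction k with
  | zero => rfl
  | succ k ih =>
    have hswap : Function.Commute (h 0)^[n 0] (compIter (fun i => h i.succ) fun i => m i.succ) :=
      .compIter (fun i => (hc 0 i.succ).iterate_left (n 0)) _
    rw [compIter_succ, compIter_succ h m, compIter_succ h n, Pi.add_apply, Function.iterate_add,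
      show (fun i : Fin k => (m + n) i.succ) = (fun i => m i.succ) + fun i => n i.succ from rfl,
      ih (fun i j => hc i.succ j.succ)]
    funext x
    exact congrArg (h 0)^[m 0] (hswap _)

variable [TopologicalSpace Z] {h : Fin k → Z → Z}

theorem isLocalHomeomorph_compIter (hlh : ∀ i, IsLocalHomeomorph (h i)) (m : Fin k → ℕ) :
    IsLocalHomeomorph (compIter h m) := by
  induction k with
  | zero => exact (Homeomorph.refl Z).isLocalHomeomorph
  | succ k ih =>
    rw [compIter_succ]
    exact ((hlh 0).iterate (m 0)).comp (ih (fun i => hlh i.succ) _)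

theorem fiberCardSup_compIter_le [CompactSpace Z] [T2Space Z]
    (hlh : ∀ i, IsLocalHomeomorph (h i)) (m : Fin k → ℕ) :
    fiberCardSup (compIter h m) ≤ ∏ i, fiberCardSup (h i)^[m i] := by
  induction k with
  | zero => exact fiberCardSup_id_le
  | succ k ih =>
    rw [compIter_succ, Fin.prod_univ_succ]
    exact (((hlh 0).iterate (m 0)).fiberCardSup_comp_le
      (isLocalHomeomorph_compIter (fun i => hlh i.succ) _)).trans
      (mul_le_mul_of_nonneg_left (ih (fun i => hlh i.succ) _) (fiberCardSup_nonneg _))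

end CompIter

section Summability

theorem summable_exp_neg_mul_of_limsup_log_div_lt {u : ℕ → ℝ} {c : ℝ} (hu : 0 ≤ u)
    (hbdd : IsBoundedUnder (· ≤ ·) atTop fun j : ℕ => Real.log (u j) / j)
    (hlt : limsup (fun j : ℕ => Real.log (u j) / j) atTop < c) :
    Summable fun j : ℕ => Real.exp (-(c * j)) * u j := by
  obtain ⟨b, hb, hbc⟩ := exists_between hlt
  have hgeom : Summable fun j : ℕ => Real.exp (b - c) ^ j :=
    summable_geometric_of_lt_one (Real.exp_nonneg _) (Real.exp_lt_one_iff.mpr (sub_neg.mpr hbc))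
  refine Summable.of_norm_bounded_eventually_nat hgeom ?_
  filter_upwards [eventually_lt_of_limsup_lt hb hbdd, eventually_gt_atTop 0] with j hj hj0
  have hlog : Real.log (u j) ≤ b * j := ((div_lt_iff₀ (Nat.cast_pos.mpr hj0)).mp hj).le
  calc ‖Real.exp (-(c * j)) * u j‖ = Real.exp (-(c * j)) * u j :=
        Real.norm_of_nonneg (mul_nonneg (Real.exp_nonneg _) (hu j))
    _ ≤ Real.exp (-(c * j)) * Real.exp (b * j) := by
        gcongr
        exact (Real.le_exp_log _).trans (Real.exp_le_exp.mpr hlog)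
    _ = Real.exp (b - c) ^ j := by
        rw [← Real.exp_add, ← Real.exp_nat_mul]
        ring_nf

theorem summable_fin_prod_of_nonneg {k : ℕ} {β : Type*} {f : Fin k → β → ℝ}
    (hf : ∀ i, Summable (f i)) (hf0 : ∀ i, 0 ≤ f i) :
    Summable fun m : Fin k → β => ∏ i, f i (m i) := by
  induction k with
  | zero => exact Summable.of_finite
  | succ k ih =>
    refine (Fin.consEquiv fun _ => β).summable_iff.mp ?_
    refine ((hf 0).mul_of_nonneg (ih (fun i => hf i.succ) fun i => hf0 i.succ) (hf0 0)
      fun m => Finset.prod_nonneg fun i _ => hf0 i.succ (m i)).congr fun x => ?_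
    simp [Fin.prod_univ_succ, Fin.consEquiv]

variable {Z : Type*} [TopologicalSpace Z] [CompactSpace Z] [T2Space Z] {f : Z → Z}

theorem IsLocalHomeomorph.isBoundedUnder_log_fiberCardSup_iterate_div
    (hf : IsLocalHomeomorph f) :
    IsBoundedUnder (· ≤ ·) atTop fun j : ℕ => Real.log (fiberCardSup f^[j]) / j := by
  refine isBoundedUnder_of ⟨max 0 (Real.log (fiberCardSup f)), fun j => ?_⟩
  refine div_le_of_le_mul₀ (Nat.cast_nonneg j) (le_max_left _ _) ?_
  rcases (fiberCardSup_nonneg f^[j]).eq_or_lt with hzero | hpos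
  · rw [← hzero, Real.log_zero]
    positivity
  · calc Real.log (fiberCardSup f^[j]) ≤ Real.log (fiberCardSup f ^ j) :=
          Real.log_le_log hpos (hf.fiberCardSup_iterate_le j)
      _ = Real.log (fiberCardSup f) * j := by rw [Real.log_pow, mul_comm]
      _ ≤ max 0 (Real.log (fiberCardSup f)) * j := by gcongr; exact le_max_right _ _

theorem IsLocalHomeomorph.summable_exp_neg_mul_fiberCardSup_iterate (hf : IsLocalHomeomorph f)
    {c : ℝ} (hc : betaC f < c) :
    Summable fun j : ℕ => Real.exp (-(c * j)) * fiberCardSup f^[j] :=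
  summable_exp_neg_mul_of_limsup_log_div_lt (fun _ => fiberCardSup_nonneg _)
    hf.isBoundedUnder_log_fiberCardSup_iterate_div hc

end Summability

section InclusionExclusion

variable {ι : Type*} [DecidableEq ι]

theorem tsum_add_indicatorVec_eq {M : Type*} [AddCommMonoid M] [TopologicalSpace M]
    (g : (ι → ℕ) → M) (J : Finset ι) :
    ∑' n, g (n + indicatorVec J) = ∑' m, if ∀ i ∈ J, m i ≠ 0 then g m else 0 := by
  have hsupp : Function.support (fun m => if ∀ i ∈ J, m i ≠ 0 then g m else 0) ⊆
      Set.range (· + indicatorVec J) := by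
    intro m hm
    have hJ : ∀ i ∈ J, m i ≠ 0 := not_not.mp fun h => hm (if_neg h)
    refine ⟨m - indicatorVec J, funext fun i => ?_⟩
    by_cases hi : i ∈ J
    · simpa [indicatorVec, hi] using Nat.sub_add_cancel (Nat.one_le_iff_ne_zero.mpr (hJ i hi))
    · simp [indicatorVec, hi]
  rw [← (add_left_injective (indicatorVec J)).tsum_eq hsupp]
  refine tsum_congr fun n => (if_pos fun i hi => ?_).symm
  simp [indicatorVec, hi]

theorem sum_powerset_neg_one_pow_mul_ite (K : Finset ι) (p : ι → Prop) [DecidablePred p]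
    (x : ℝ) :
    ∑ J ∈ K.powerset, (-1) ^ J.card * (if ∀ i ∈ J, p i then x else 0) =
      if ∀ i ∈ K, ¬p i then x else 0 := by
  have hfilter : K.powerset.filter (fun J => ∀ i ∈ J, p i) = (K.filter p).powerset := by
    ext J
    simp only [Finset.mem_filter, Finset.mem_powerset, Finset.subset_iff]
    grind
  have halt := congrArg (Int.cast : ℤ → ℝ) (Finset.sum_powerset_neg_one_pow_card (x := K.filter p))
  push_cast at halt
  simp_rw [mul_ite, mul_zero]
  rw [← Finset.sum_filter, hfilter, ← Finset.sum_mul, halt]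
  simp only [Finset.filter_eq_empty_iff, ite_mul, one_mul, zero_mul]

theorem sum_powerset_neg_one_pow_mul_tsum_add_indicatorVec {g : (ι → ℕ) → ℝ} (hg : Summable g)
    (K : Finset ι) :
    ∑ J ∈ K.powerset, (-1) ^ J.card * ∑' n, g (n + indicatorVec J) =
      ∑' m, if ∀ i ∈ K, m i = 0 then g m else 0 := by
  have hsum : ∀ J : Finset ι,
      Summable fun m => (-1 : ℝ) ^ J.card * if ∀ i ∈ J, m i ≠ 0 then g m else 0 := fun J =>
    ((hg.indicator {m | ∀ i ∈ J, m i ≠ 0}).congr fun m => by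
      simp [Set.indicator_apply]).mul_left _
  simp_rw [tsum_add_indicatorVec_eq, ← tsum_mul_left]
  rw [← Summable.tsum_finsetSum fun J _ => hsum J]
  exact tsum_congr fun m => by
    simpa using sum_powerset_neg_one_pow_mul_ite K (fun i => m i ≠ 0) (g m)

end InclusionExclusion

section Series

variable {Z : Type*} [TopologicalSpace Z] [CompactSpace Z] [T2Space Z] [MeasurableSpace Z]
  {k : ℕ} {h : Fin k → Z → Z} {r : Fin k → ℝ} {β : ℝ}

theorem summable_exp_mul_integral_transfer_compIter (hlh : ∀ i, IsLocalHomeomorph (h i))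
    (hβc : ∀ i, betaC (h i) < β * r i) (ε : Measure Z) [IsFiniteMeasure ε] {a : Z → ℝ}
    (ha : Continuous a) :
    Summable fun m : Fin k → ℕ =>
      Real.exp (-(β * ∑ i, r i * m i)) * ∫ z, transfer (compIter h m) a z ∂ε := by
  set C := ‖BoundedContinuousFunction.mkOfCompact ⟨a, ha⟩‖
  have hC : ∀ x, ‖a x‖ ≤ C := (BoundedContinuousFunction.mkOfCompact ⟨a, ha⟩).norm_coe_le_norm
  set q : Fin k → ℕ → ℝ := fun i j => Real.exp (-(β * r i * j)) * fiberCardSup (h i)^[j]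
  have hq : Summable fun m : Fin k → ℕ => ∏ i, q i (m i) :=
    summable_fin_prod_of_nonneg
      (fun i => (hlh i).summable_exp_neg_mul_fiberCardSup_iterate (hβc i))
      fun i j => mul_nonneg (Real.exp_nonneg _) (fiberCardSup_nonneg _)
  refine Summable.of_norm_bounded (hq.mul_left (C * ε.real Set.univ)) fun m => ?_
  have hexp : Real.exp (-(β * ∑ i, r i * m i)) = ∏ i, Real.exp (-(β * r i * m i)) := by
    rw [← Real.exp_sum, Finset.mul_sum, ← Finset.sum_neg_distrib]
    simp only [mul_assoc]
  have hint : ‖∫ z, transfer (compIter h m) a z ∂ε‖ ≤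
      fiberCardSup (compIter h m) * C * ε.real Set.univ :=
    norm_integral_le_of_norm_le_const (ae_of_all _
      ((isLocalHomeomorph_compIter hlh m).norm_transfer_le hC (norm_nonneg _)))
  calc ‖Real.exp (-(β * ∑ i, r i * m i)) * ∫ z, transfer (compIter h m) a z ∂ε‖
      = Real.exp (-(β * ∑ i, r i * m i)) * ‖∫ z, transfer (compIter h m) a z ∂ε‖ := by
        rw [norm_mul, Real.norm_of_nonneg (Real.exp_nonneg _)]
    _ ≤ Real.exp (-(β * ∑ i, r i * m i)) *
        ((∏ i, fiberCardSup (h i)^[m i]) * C * ε.real Set.univ) := by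
        gcongr
        exact hint.trans (by gcongr; exact fiberCardSup_compIter_le hlh m)
    _ = C * ε.real Set.univ * ∏ i, q i (m i) := by
        rw [hexp, Finset.prod_mul_distrib]
        ring

theorem exp_mul_integral_transfer_compSet_eq_tsum (hlh : ∀ i, IsLocalHomeomorph (h i))
    (hcomm : ∀ i j, Function.Commute (h i) (h j)) {ε μ : Measure Z}
    (hμ : ∀ a : Z → ℝ, Continuous a → ∫ z, a z ∂μ =
      ∑' n : Fin k → ℕ, Real.exp (-(β * ∑ i, r i * n i)) * ∫ z, transfer (compIter h n) a z ∂ε)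
    {a : Z → ℝ} (ha : Continuous a) (J : Finset (Fin k)) :
    Real.exp (-(β * ∑ i ∈ J, r i)) * ∫ z, transfer (compSet h J) a z ∂μ =
      ∑' n : Fin k → ℕ,
        Real.exp (-(β * ∑ i, r i * (n + indicatorVec J) i)) *
          ∫ z, transfer (compIter h (n + indicatorVec J)) a z ∂ε := by
  have hfin m := (isLocalHomeomorph_compIter hlh m).finite_preimage_singleton
  rw [compSet_eq_compIter, hμ _ ((isLocalHomeomorph_compIter hlh _).continuous_transfer ha),
    ← tsum_mul_left]
  refine tsum_congr fun n => ?_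
  rw [compIter_add hcomm, transfer_comp (hfin n) (hfin _), ← mul_assoc, ← Real.exp_add]
  congr 2
  simp only [indicatorVec, Pi.add_apply, Nat.cast_add, Nat.cast_ite, Nat.cast_one, Nat.cast_zero,
    mul_add, mul_ite, mul_one, mul_zero, Finset.sum_add_distrib, Finset.sum_ite_mem,
    Finset.univ_inter]
  ring

end Series

theorem subinvariance_and_recovery_general {Z : Type*} [TopologicalSpace Z] [CompactSpace Z]
    [T2Space Z] [MeasurableSpace Z] {k : ℕ} (h : Fin k → Z → Z)
    (hlh : ∀ i, IsLocalHomeomorph (h i))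
    (hcomm : ∀ i j : Fin k, (h i) ∘ (h j) = (h j) ∘ (h i))
    (r : Fin k → ℝ)
    (β : ℝ) (hβc : ∀ i, betaC (h i) < β * r i)
    (ε : Measure Z) [IsFiniteMeasure ε]
    (μ : Measure Z)
    (hμ : ∀ a : Z → ℝ, Continuous a →
      ∫ z, a z ∂μ =
        ∑' n : Fin k → ℕ,
          Real.exp (-(β * ∑ i, r i * n i)) *
            ∫ z, (∑ᶠ w ∈ (compIter h n) ⁻¹' {z}, a w) ∂ε) :
    (∀ K : Finset (Fin k), ∀ a : Z → ℝ, Continuous a → (∀ z, 0 ≤ a z) →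
      0 ≤ ∑ J ∈ K.powerset,
        (-1 : ℝ) ^ J.card * Real.exp (-(β * ∑ i ∈ J, r i)) *
          ∫ z, (∑ᶠ w ∈ (compSet h J) ⁻¹' {z}, a w) ∂μ) ∧
    (∀ a : Z → ℝ, Continuous a →
      ∫ z, a z ∂ε =
        ∑ J : Finset (Fin k),
          (-1 : ℝ) ^ J.card * Real.exp (-(β * ∑ i ∈ J, r i)) *
            ∫ z, (∑ᶠ w ∈ (compSet h J) ⁻¹' {z}, a w) ∂μ) := by
  simp only [← transfer_def] at hμ ⊢
  have key : ∀ K : Finset (Fin k), ∀ a : Z → ℝ, Continuous a →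
      ∑ J ∈ K.powerset, (-1 : ℝ) ^ J.card * Real.exp (-(β * ∑ i ∈ J, r i)) *
          ∫ z, transfer (compSet h J) a z ∂μ =
        ∑' m : Fin k → ℕ, if ∀ i ∈ K, m i = 0 then
          Real.exp (-(β * ∑ i, r i * m i)) * ∫ z, transfer (compIter h m) a z ∂ε else 0 := by
    intro K a ha
    simp_rw [mul_assoc, exp_mul_integral_transfer_compSet_eq_tsum hlh
      (fun i j => congrFun (hcomm i j)) hμ ha]
    convert sum_powerset_neg_one_pow_mul_tsum_add_indicatorVec
      (summable_exp_mul_integral_transfer_compIter hlh hβc ε ha) K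
  refine ⟨fun K a ha ha0 => ?_, fun a ha => ?_⟩
  · rw [key K a ha]
    refine tsum_nonneg fun m => ?_
    split_ifs
    · exact mul_nonneg (Real.exp_nonneg _) (integral_nonneg (transfer_nonneg ha0))
    · exact le_rfl
  · rw [← Finset.powerset_univ, key _ a ha, tsum_eq_single 0 fun m hm =>
      if_neg fun hzero => hm (funext fun i => hzero i (Finset.mem_univ i))]
    simp

/-- if `μ = ∑_{n ∈ ℕ^k} e^{-β r·n} R^n ε`, then `μ` satisfies the
subinvariance relation, and `ε = ∏_i (1 - e^{-β r_i} R^{e_i}) μ`. -/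
theorem subinvariance_and_recovery {Z : Type*} [TopologicalSpace Z] [CompactSpace Z]
    [T2Space Z] [MeasurableSpace Z] [BorelSpace Z] {k : ℕ} (h : Fin k → Z → Z)
    (hlh : ∀ i, IsLocalHomeomorph (h i))
    (hsurj : ∀ i, Function.Surjective (h i))
    (hcomm : ∀ i j : Fin k, (h i) ∘ (h j) = (h j) ∘ (h i))
    (r : Fin k → ℝ) (hr : ∀ i, 0 < r i)
    (β : ℝ) (hβ : 0 < β) (hβc : ∀ i, betaC (h i) < β * r i)
    (ε : Measure Z) [IsFiniteMeasure ε] [MeasureTheory.Measure.Regular ε]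
    (μ : Measure Z) [IsFiniteMeasure μ]
    (hμ : ∀ a : Z → ℝ, Continuous a →
      ∫ z, a z ∂μ =
        ∑' n : Fin k → ℕ,
          Real.exp (-(β * ∑ i, r i * n i)) *
            ∫ z, (∑ᶠ w ∈ (compIter h n) ⁻¹' {z}, a w) ∂ε) :
    (∀ K : Finset (Fin k), ∀ a : Z → ℝ, Continuous a → (∀ z, 0 ≤ a z) →
      0 ≤ ∑ J ∈ K.powerset,
        (-1 : ℝ) ^ J.card * Real.exp (-(β * ∑ i ∈ J, r i)) *
          ∫ z, (∑ᶠ w ∈ (compSet h J) ⁻¹' {z}, a w) ∂μ) ∧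
    (∀ a : Z → ℝ, Continuous a →
      ∫ z, a z ∂ε =
        ∑ J : Finset (Fin k),
          (-1 : ℝ) ^ J.card * Real.exp (-(β * ∑ i ∈ J, r i)) *
            ∫ z, (∑ᶠ w ∈ (compSet h J) ⁻¹' {z}, a w) ∂μ) :=
  subinvariance_and_recovery_general h hlh hcomm r β hβc ε μ hμ
end
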